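/- arXiv:1707.09357 — 2 statements merged into one kernel-verified Lean document; each statement's English description precedes it below -/
import Mathlib

section
/- Let f be a homeomorphism of a compact metric space (X,d) and let n be a positive integer. If f is positively n-expansive, topologically transitive, and has the shadowing property, then there exists a finite subset A ⊆ X such that X = ⋃_{x∈A} W^u(x), i.e. every point of X belongs to the unstable set of some point of A. -/
open Metric Filter Set

variable {X : Type*} [MetricSpace X]

/-- The iterate of a homeomorphism by an integer power. -/
def hIter (f : X ≃ₜ X) (k : ℤ) (x : X) : X := (f.toEquiv ^ k) x

/-- The local stable set of `x` of size `c`: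
points whose forward iterates stay `c`-close to those of `x`. -/
def localStable (f : X ≃ₜ X) (c : ℝ) (x : X) : Set X :=
  {y | ∀ k : ℕ, dist ((⇑f)^[k] y) ((⇑f)^[k] x) ≤ c}

/-- The local unstable set of `x` of size `c`:
points whose backward iterates stay `c`-close to those of `x`. -/
def localUnstable (f : X ≃ₜ X) (c : ℝ) (x : X) : Set X :=
  {y | ∀ k : ℕ, dist ((⇑f.symm)^[k] y) ((⇑f.symm)^[k] x) ≤ c}

/-- The stable set of `x`. -/
def stableSet (f : X ≃ₜ X) (x : X) : Set X :=
  {y | Tendsto (fun k : ℕ => dist ((⇑f)^[k] y) ((⇑f)^[k] x)) atTop (nhds 0)}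

/-- The unstable set of `x`. -/
def unstableSet (f : X ≃ₜ X) (x : X) : Set X :=
  {y | Tendsto (fun k : ℕ => dist ((⇑f.symm)^[k] y) ((⇑f.symm)^[k] x)) atTop (nhds 0)}

/-- `f` is positively `n`-expansive: for some `c > 0` every local stable set of
size `c` contains at most `n` points. -/
def PosNExpansive (f : X ≃ₜ X) (n : ℕ) : Prop :=
  ∃ c > 0, ∀ x : X, ∀ S : Finset X, ↑S ⊆ localStable f c x → S.card ≤ n

/-- `f` is `n`-expansive: for some `c > 0` every dynamical ball of size `c`
contains at most `n` points. -/
def NExpansive (f : X ≃ₜ X) (n : ℕ) : Prop :=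
  ∃ c > 0, ∀ x : X, ∀ S : Finset X,
    ↑S ⊆ localStable f c x ∩ localUnstable f c x → S.card ≤ n

/-- `f` is expansive. -/
def Expansive (f : X ≃ₜ X) : Prop :=
  ∃ c > 0, ∀ x y : X, (∀ k : ℤ, dist (hIter f k x) (hIter f k y) ≤ c) → x = y

/-- `(x_k)_{k ∈ ℤ}` is a `δ`-pseudo-orbit. -/
def IsPseudoOrbit (f : X ≃ₜ X) (δ : ℝ) (x : ℤ → X) : Prop :=
  ∀ k : ℤ, dist (f (x k)) (x (k + 1)) < δ

/-- `(x_k)_{k ∈ ℤ}` is a two-sided limit pseudo-orbit: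
`d(f(x_k), x_{k+1}) → 0` as `|k| → ∞`. -/
def IsTwoSidedLimitPseudoOrbit (f : X ≃ₜ X) (x : ℤ → X) : Prop :=
  Tendsto (fun k : ℤ => dist (f (x k)) (x (k + 1))) cofinite (nhds 0)

/-- `z` `ε`-shadows the sequence `(x_k)_{k ∈ ℤ}`. -/
def Shadows (f : X ≃ₜ X) (ε : ℝ) (z : X) (x : ℤ → X) : Prop :=
  ∀ k : ℤ, dist (hIter f k z) (x k) < ε

/-- `z` two-sided limit shadows `(x_k)_{k ∈ ℤ}`. -/
def TwoSidedLimitShadows (f : X ≃ₜ X) (z : X) (x : ℤ → X) : Prop :=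
  Tendsto (fun k : ℤ => dist (hIter f k z) (x k)) cofinite (nhds 0)

/-- The shadowing property. -/
def ShadowingProperty (f : X ≃ₜ X) : Prop :=
  ∀ ε > 0, ∃ δ > 0, ∀ x : ℤ → X, IsPseudoOrbit f δ x → ∃ z : X, Shadows f ε z x

/-- The L-shadowing property. -/
def LShadowingProperty (f : X ≃ₜ X) : Prop :=
  ∀ ε > 0, ∃ δ > 0, ∀ x : ℤ → X, IsPseudoOrbit f δ x →
    IsTwoSidedLimitPseudoOrbit f x →
    ∃ z : X, Shadows f ε z x ∧ TwoSidedLimitShadows f z x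

/-- Topological transitivity. -/
def TopTransitive (f : X ≃ₜ X) : Prop :=
  ∀ U V : Set X, IsOpen U → IsOpen V → U.Nonempty → V.Nonempty →
    ∃ k : ℕ, ((⇑f)^[k] '' U ∩ V).Nonempty

/-- There is a nontrivial finite `ε`-pseudo-orbit from `x` to `y`. -/
def ChainFrom (f : X ≃ₜ X) (ε : ℝ) (x y : X) : Prop :=
  ∃ (l : ℕ) (c : ℕ → X), 0 < l ∧ c 0 = x ∧ c l = y ∧
    ∀ k < l, dist (f (c k)) (c (k + 1)) < ε

/-- `x` is a chain recurrent point of `f`. -/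
def ChainRecurrent (f : X ≃ₜ X) (x : X) : Prop :=
  ∀ ε > 0, ChainFrom f ε x x

/-- The chain recurrent class of `x`. -/
def chainClass (f : X ≃ₜ X) (x : X) : Set X :=
  {y | ∀ ε > 0, ChainFrom f ε x y ∧ ChainFrom f ε y x}

/-- `x` is a periodic point of `f`. -/
def Periodic (f : X ≃ₜ X) (x : X) : Prop :=
  ∃ k : ℕ, 1 ≤ k ∧ (⇑f)^[k] x = x

/-- `x` is a non-wandering point of `f`. -/
def NonWandering (f : X ≃ₜ X) (x : X) : Prop :=
  ∀ U : Set X, IsOpen U → x ∈ U → ∃ k : ℕ, 0 < k ∧ ((⇑f)^[k] '' U ∩ U).Nonempty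

/-- The omega limit set of `x`: accumulation points of the forward orbit. -/
def omegaLimitSet (f : X ≃ₜ X) (x : X) : Set X :=
  {y | ∃ φ : ℕ → ℕ, StrictMono φ ∧ Tendsto (fun n => (⇑f)^[φ n] x) atTop (nhds y)}

/-- `z` two-sided limit shadows `(x_k)` with gap `K`. -/
def TwoSidedLimitShadowsWithGap (f : X ≃ₜ X) (K : ℤ) (z : X) (x : ℤ → X) : Prop :=
  Tendsto (fun k : ℤ => dist (hIter f k z) (x k)) atBot (nhds 0) ∧
  Tendsto (fun k : ℤ => dist (hIter f (K + k) z) (x k)) atTop (nhds 0)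

/-!
The space is in fact finite, so its points themselves can serve as `A`.

Positive `n`-expansivity makes every local stable set finite. Hence a point `z` whose forward
orbit stays `ε`-close to a `k`-periodic sequence is periodic: the points `f^[j * k] z` all lie in
the local stable set of `z`, so two of them coincide. Shadowing the periodic pseudo-orbit of an
almost-return given by transitivity then yields periodic points near every point.

If `p` is any point and `q` is periodic, transitivity and shadowing give a point `z` whose past
follows the orbit of `p` and whose future, from time `k` on, follows the orbit of `q`. Then
`f^[k] z` is periodic, so the past of `z` returns to `f^[k] z`, which is close to `q`; hence
`q` lies in the closure of the orbit of `p`. In an infinite space, a periodic point off the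
finite orbit of another periodic point would contradict this.
-/

open Function

section Iterates

variable (f : X ≃ₜ X)

@[simp] lemma hIter_zero (x : X) : hIter f 0 x = x := by simp [hIter]

lemma hIter_add (s t : ℤ) (x : X) : hIter f (s + t) x = hIter f s (hIter f t x) := by
  simp [hIter, zpow_add, Equiv.Perm.mul_apply]

@[simp] lemma hIter_natCast (k : ℕ) (x : X) : hIter f k x = f^[k] x := by
  simp [hIter, Equiv.Perm.coe_pow]

lemma apply_hIter (t : ℤ) (x : X) : f (hIter f t x) = hIter f (t + 1) x := by
  rw [hIter, hIter, add_comm, zpow_one_add, Equiv.Perm.mul_apply]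
  rfl

variable {f}

lemma Function.IsPeriodicPt.periodic_hIter {b : ℕ} {q : X} (hq : IsPeriodicPt f b q) :
    Periodic (fun t : ℤ => hIter f t q) b := fun t => by
  simp only [hIter_add, hIter_natCast, hq.eq]

lemma finite_range_hIter {q : X} (hq : q ∈ periodicPts f) :
    (range fun t : ℤ => hIter f t q).Finite := by
  obtain ⟨b, hb, hbq⟩ := hq
  refine ((finite_Ico 0 (b : ℤ)).image fun t => hIter f t q).subset ?_
  rintro _ ⟨t, rfl⟩
  obtain ⟨s, hs, hts⟩ :=
    (IsPeriodicPt.periodic_hIter hbq).exists_mem_Ico₀ (by exact_mod_cast hb) t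
  exact ⟨s, hs, hts.symm⟩

lemma TopTransitive.exists_pos_iterate_mem (htrans : TopTransitive f) {U V : Set X}
    (hU : IsOpen U) (hV : IsOpen V) (hU' : U.Nonempty) (hV' : V.Nonempty) :
    ∃ k > 0, ∃ u ∈ U, f^[k] u ∈ V := by
  obtain ⟨k, _, ⟨_, ⟨u, hu, rfl⟩, rfl⟩, hv⟩ :=
    htrans (f '' U) V (f.isOpenMap U hU) hV (hU'.image f) hV'
  exact ⟨k + 1, k.succ_pos, u, hu, by rwa [iterate_succ_apply]⟩

end Iterates

section PseudoOrbits

variable {f : X ≃ₜ X} {δ : ℝ}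

lemma isPseudoOrbit_hIter (hδ : 0 < δ) (x : X) : IsPseudoOrbit f δ fun t => hIter f t x :=
  fun t => by simpa [apply_hIter] using hδ

lemma IsPseudoOrbit.comp_sub {x : ℤ → X} (hx : IsPseudoOrbit f δ x) (r : ℤ) :
    IsPseudoOrbit f δ fun t => x (t - r) :=
  fun t => by simpa [sub_add_eq_add_sub] using hx (t - r)

lemma IsPseudoOrbit.piecewise {x y : ℤ → X} (hx : IsPseudoOrbit f δ x)
    (hy : IsPseudoOrbit f δ y) {s : ℤ} (hs : dist (f (x (s - 1))) (y s) < δ) :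
    IsPseudoOrbit f δ fun t => if t < s then x t else y t := by
  intro t
  rcases lt_trichotomy (t + 1) s with h | h | h
  · simpa [show t < s by omega, h] using hx t
  · obtain rfl : t = s - 1 := by omega
    simpa using hs
  · simpa [show ¬ t < s by omega, h.not_gt] using hy t

lemma isPseudoOrbit_cycle (hδ : 0 < δ) {u : X} {k : ℕ} (hk : 0 < k)
    (hu : dist (f^[k] u) u < δ) : IsPseudoOrbit f δ fun t => hIter f (t % k) u := by
  intro t
  have hk' : (0 : ℤ) < k := by exact_mod_cast hk
  have h0 := Int.emod_nonneg t hk'.ne'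
  have h1 := Int.emod_lt_of_pos t hk'
  dsimp only
  rw [apply_hIter, ← Int.emod_add_emod]
  rcases (Int.add_one_le_iff.2 h1).lt_or_eq with h | h
  · simpa [Int.emod_eq_of_lt (by omega) h] using hδ
  · simpa [h] using hu

lemma isPseudoOrbit_connecting (hδ : 0 < δ) {p u q : X} {k : ℕ} (hk : 0 < k)
    (hu : dist p u < δ) (hku : dist (f^[k] u) q < δ) :
    IsPseudoOrbit f δ fun t =>
      if t < 0 then hIter f t p else if t < k then hIter f t u else hIter f (t - k) q := by
  refine (isPseudoOrbit_hIter hδ p).piecewise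
    ((isPseudoOrbit_hIter hδ u).piecewise ((isPseudoOrbit_hIter hδ q).comp_sub k) ?_) ?_
  · simpa [apply_hIter] using hku
  · simpa [apply_hIter, hk] using hu

end PseudoOrbits

section Expansive

variable {f : X ≃ₜ X}

lemma PosNExpansive.exists_finite_localStable {n : ℕ} (h : PosNExpansive f n) :
    ∃ c > 0, ∀ x, (localStable f c x).Finite := by
  obtain ⟨c, hc, hC⟩ := h
  refine ⟨c, hc, fun x => Set.not_infinite.1 fun hinf => ?_⟩
  obtain ⟨S, hS, hcard⟩ := hinf.exists_subset_card_eq (n + 1)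
  have := hC x S hS
  omega

lemma mem_periodicPts_of_forall_dist_iterate_lt {c ε : ℝ}
    (hfin : ∀ x, (localStable f c x).Finite) (hεc : 2 * ε ≤ c) {x : ℕ → X} {k : ℕ}
    (hk : 0 < k) (hx : Periodic x k) {z : X} (hz : ∀ m : ℕ, dist (f^[m] z) (x m) < ε) :
    z ∈ periodicPts f := by
  have hstable : ∀ j : ℕ, f^[j * k] z ∈ localStable f c z := fun j m => by
    have h := hz (m + j * k)
    rw [show x (m + j * k) = x m from hx.nat_mul j m] at h
    rw [← iterate_add_apply]
    linarith [hz m, dist_triangle_right (f^[m + j * k] z) (f^[m] z) (x m)]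
  obtain ⟨i, j, hij, heq⟩ := Set.Finite.exists_lt_map_eq_of_forall_mem hstable (hfin z)
  refine mk_mem_periodicPts ?_ (iterate_cancel f.injective heq.symm)
  have := Nat.mul_lt_mul_of_pos_right hij hk
  omega

variable {n : ℕ}

theorem dense_periodicPts (hexp : PosNExpansive f n) (htrans : TopTransitive f)
    (hshad : ShadowingProperty f) : Dense (periodicPts f) := by
  obtain ⟨c, hc, hfin⟩ := hexp.exists_finite_localStable
  refine Metric.dense_iff.2 fun y r hr => ?_
  set ε := min c r / 2 with hε
  obtain ⟨δ, hδ, hsh⟩ := hshad ε (by positivity)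
  set ρ := min δ ε / 2 with hρ
  obtain ⟨k, hk, u, hu, hku⟩ := htrans.exists_pos_iterate_mem (U := ball y ρ) (V := ball y ρ)
    isOpen_ball isOpen_ball (nonempty_ball.2 (by positivity)) (nonempty_ball.2 (by positivity))
  rw [mem_ball] at hu hku
  have hcycle : dist (f^[k] u) u < δ := by
    linarith [dist_triangle_right (f^[k] u) u y, min_le_left δ ε]
  obtain ⟨z, hz⟩ := hsh _ (isPseudoOrbit_cycle hδ hk hcycle)
  have hperiodic : z ∈ periodicPts f := by
    refine mem_periodicPts_of_forall_dist_iterate_lt hfin (ε := ε) (x := fun m => f^[m % k] u)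
      (by linarith [min_le_left c r]) hk (fun m => by simp only [Nat.add_mod_right]) fun m => ?_
    simpa only [← Int.natCast_mod, hIter_natCast] using hz m
  have hzu : dist z u < ε := by simpa using hz 0
  refine ⟨z, mem_ball.2 ?_, hperiodic⟩
  linarith [dist_triangle z u y, min_le_right δ ε, min_le_right c r]

theorem mem_closure_range_hIter (hexp : PosNExpansive f n) (htrans : TopTransitive f)
    (hshad : ShadowingProperty f) (p : X) {q : X} (hq : q ∈ periodicPts f) :
    q ∈ closure (range fun t : ℤ => hIter f t p) := by
  obtain ⟨c, hc, hfin⟩ := hexp.exists_finite_localStable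
  obtain ⟨b, hb, hbq⟩ := hq
  refine Metric.mem_closure_iff.2 fun s hs => ?_
  set ε := min c s / 2 with hε
  obtain ⟨δ, hδ, hsh⟩ := hshad ε (by positivity)
  obtain ⟨k, hk, u, hu, hku⟩ := htrans.exists_pos_iterate_mem (U := ball p δ) (V := ball q δ)
    isOpen_ball isOpen_ball (nonempty_ball.2 hδ) (nonempty_ball.2 hδ)
  rw [mem_ball, dist_comm] at hu
  rw [mem_ball] at hku
  obtain ⟨z, hz⟩ := hsh _ (isPseudoOrbit_connecting hδ hk hu hku)
  have hfuture : ∀ m : ℕ, dist (f^[m + k] z) (f^[m] q) < ε := fun m => by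
    have h := hz ((m + k : ℕ) : ℤ)
    simp only [hIter_natCast, Nat.cast_add, if_neg (by omega : ¬ ((m : ℤ) + k < 0)),
      if_neg (by omega : ¬ ((m : ℤ) + k < k)), add_sub_cancel_right] at h
    exact h
  have hperiodic : f^[k] z ∈ periodicPts f := by
    refine mem_periodicPts_of_forall_dist_iterate_lt hfin (ε := ε) (x := fun m => f^[m] q)
      (by linarith [min_le_left c s]) hb (fun m => by simp only [iterate_add_apply, hbq.eq])
      fun m => ?_
    simpa [← iterate_add_apply] using hfuture m
  obtain ⟨P, hP, hPz⟩ := hperiodic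
  set t₀ : ℤ := -(k + 1) * P + k with ht₀
  have ht₀neg : t₀ < 0 := by
    have : (k + 1 : ℤ) ≤ (k + 1) * P :=
      le_mul_of_one_le_right (by positivity) (by exact_mod_cast hP)
    linarith
  have hreturn : hIter f t₀ z = f^[k] z := by
    rw [ht₀, hIter_add, hIter_natCast]
    simpa using (IsPeriodicPt.periodic_hIter hPz).int_mul_eq (-(k + 1))
  have hpast := hz t₀
  simp only [ht₀neg, if_true, hreturn] at hpast
  have hnow := hfuture 0
  rw [zero_add, iterate_zero_apply] at hnow
  refine ⟨hIter f t₀ p, mem_range_self t₀, ?_⟩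
  linarith [dist_triangle_left q (hIter f t₀ p) (f^[k] z), min_le_right c s]

theorem finite_of_posNExpansive (hexp : PosNExpansive f n) (htrans : TopTransitive f)
    (hshad : ShadowingProperty f) : Finite X := by
  by_contra hinf
  rw [not_finite_iff_infinite] at hinf
  have hdense := dense_periodicPts hexp htrans hshad
  obtain ⟨p, hp⟩ := hdense.nonempty
  have hO := finite_range_hIter hp
  obtain ⟨q, hqO, hq⟩ :=
    hdense.inter_open_nonempty _ hO.isClosed.isOpen_compl hO.infinite_compl.nonempty
  exact hqO (hO.isClosed.closure_subset (mem_closure_range_hIter hexp htrans hshad p hq))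

end Expansive

theorem stmt11_general {X : Type*} [MetricSpace X] (f : X ≃ₜ X) (n : ℕ)
    (hexp : PosNExpansive f n) (htrans : TopTransitive f)
    (hshad : ShadowingProperty f) :
    ∃ A : Finset X, ∀ y : X, ∃ a ∈ A, y ∈ unstableSet f a := by
  have := finite_of_posNExpansive hexp htrans hshad
  have := Fintype.ofFinite X
  exact ⟨Finset.univ, fun y => ⟨y, Finset.mem_univ y, by simp [unstableSet]⟩⟩

theorem stmt11 {X : Type*} [MetricSpace X] [CompactSpace X] (f : X ≃ₜ X) (n : ℕ)
    (hn : 0 < n) (hexp : PosNExpansive f n) (htrans : TopTransitive f)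
    (hshad : ShadowingProperty f) :
    ∃ A : Finset X, ∀ y : X, ∃ a ∈ A, y ∈ unstableSet f a :=
  stmt11_general f n hexp htrans hshad
end

section
/- Let f be a homeomorphism of a compact metric space (X,d) and let n be a positive integer. Suppose f is positively n-expansive. If x ∈ X is a point whose omega limit set ω(x) is finite and consists of periodic points, then x is periodic. -/
open Metric Filter Set

variable {X : Type*} [MetricSpace X]

private lemma aux_min_combine (P : ℕ → ℝ → Prop)
    (hmono : ∀ r η η', 0 < η' → η' ≤ η → P r η → P r η') :
    ∀ m : ℕ, (∀ r < m, ∃ η > 0, P r η) → ∃ η > 0, ∀ r < m, P r η := by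
  intro m
  induction m with
  | zero => exact fun _ => ⟨1, one_pos, by omega⟩
  | succ m ih =>
    intro h
    obtain ⟨η, hη, hP⟩ := ih (fun r hr => h r (hr.trans (Nat.lt_succ_self m)))
    obtain ⟨η', hη', hP'⟩ := h m (Nat.lt_succ_self m)
    refine ⟨min η η', lt_min hη hη', fun r hr => ?_⟩
    rcases Nat.lt_succ_iff_lt_or_eq.mp hr with h1 | h2
    · exact hmono r η _ (lt_min hη hη') (min_le_left _ _) (hP r h1)
    · subst h2; exact hmono r η' _ (lt_min hη hη') (min_le_right _ _) hP'

theorem stmt13 {X : Type*} [MetricSpace X] [CompactSpace X] (f : X ≃ₜ X) (n : ℕ)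
    (hn : 0 < n) (hexp : PosNExpansive f n) (x : X)
    (hfin : (omegaLimitSet f x).Finite)
    (hper : ∀ y ∈ omegaLimitSet f x, Periodic f y) :
    Periodic f x := by
  classical
  obtain ⟨c, hc, hcard⟩ := hexp
  set S := omegaLimitSet f x with hS
  -- key closing lemma: a coincidence of iterates yields periodicity of x
  have key : ∀ A B : ℕ, A < B → (⇑f)^[A] x = (⇑f)^[B] x → Periodic f x := by
    intro A B hAB hE
    refine ⟨B - A, by omega, ?_⟩
    have h3 : (⇑f)^[A] ((⇑f)^[B - A] x) = (⇑f)^[A] x := by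
      rw [← Function.iterate_add_apply]
      have hba : A + (B - A) = B := by omega
      rw [hba]; exact hE.symm
    exact (f.injective.iterate A) h3
  -- the forward orbit approaches S
  have happroach : ∀ ε > 0, ∃ K : ℕ, ∀ k ≥ K, ∃ y ∈ S, dist ((⇑f)^[k] x) y < ε := by
    intro ε hε
    by_contra hcon
    push_neg at hcon
    have hfreq : ∃ᶠ k in atTop, ∀ y ∈ S, ε ≤ dist ((⇑f)^[k] x) y := by
      rw [Filter.frequently_atTop]
      intro N
      obtain ⟨k, hk1, hk2⟩ := hcon N
      exact ⟨k, hk1, hk2⟩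
    obtain ⟨k, hkmono, hkP⟩ := Filter.extraction_of_frequently_atTop hfreq
    obtain ⟨z, -, ψ, hψ, hz⟩ := isCompact_univ.tendsto_subseq
      (x := fun j => (⇑f)^[k j] x) (fun _ => Set.mem_univ _)
    have hzS : z ∈ S := ⟨k ∘ ψ, hkmono.comp hψ, hz⟩
    have hd : Tendsto (fun i => dist ((⇑f)^[k (ψ i)] x) z) atTop (nhds 0) := by
      have := hz.dist (tendsto_const_nhds (x := z))
      simpa using this
    obtain ⟨i, hi⟩ := (hd.eventually_lt_const hε).exists
    exact absurd (hkP (ψ i) z hzS) (not_le.mpr hi)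
  -- a common period m for all points of S
  choose! per hper1 hper2 using hper
  set T := hfin.toFinset with hT
  set m := ∏ y ∈ T, per y with hmdef
  have hm : 0 < m := by
    apply Finset.prod_pos
    intro y hy
    exact hper1 y (hfin.mem_toFinset.mp hy)
  have hfix : ∀ y ∈ S, (⇑f)^[m] y = y := by
    intro y hy
    have hyT : y ∈ T := hfin.mem_toFinset.mpr hy
    obtain ⟨t, ht⟩ := Finset.dvd_prod_of_mem per hyT
    rw [← hmdef] at ht
    rw [ht, Function.iterate_mul]
    exact Function.iterate_fixed (hper2 y hy) t
  -- S is nonempty would follow; separation constant on S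
  have hsep : ∃ δ > 0, ∀ a ∈ S, ∀ b ∈ S, dist a b < δ → a = b := by
    by_cases hne : (Finset.filter (fun q : X × X => q.1 ≠ q.2) (T ×ˢ T)).Nonempty
    · obtain ⟨q, hq, hqmin⟩ := Finset.exists_min_image _ (fun q : X × X => dist q.1 q.2) hne
      simp only [Finset.mem_filter, Finset.mem_product] at hq
      refine ⟨dist q.1 q.2, dist_pos.mpr hq.2, ?_⟩
      intro a ha b hb hab
      by_contra hne2
      have hmem : (a, b) ∈ Finset.filter (fun q : X × X => q.1 ≠ q.2) (T ×ˢ T) := by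
        simp only [Finset.mem_filter, Finset.mem_product]
        exact ⟨⟨hfin.mem_toFinset.mpr ha, hfin.mem_toFinset.mpr hb⟩, hne2⟩
      exact absurd (hqmin (a, b) hmem) (not_le.mpr hab)
    · refine ⟨1, one_pos, fun a ha b hb _ => ?_⟩
      by_contra h
      exact hne ⟨(a, b), by
        simp only [Finset.mem_filter, Finset.mem_product]
        exact ⟨⟨hfin.mem_toFinset.mpr ha, hfin.mem_toFinset.mpr hb⟩, h⟩⟩
  -- the subsampled orbit
  set a : ℕ → X := fun q => (⇑f)^[m * q] x with hadef
  have ha_succ : ∀ q, a (q + 1) = (⇑f)^[m] (a q) := by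
    intro q
    have : m * (q + 1) = m + m * q := by ring
    simp only [hadef, this, Function.iterate_add_apply]
  have hnear : ∀ ε > 0, ∃ K, ∀ q ≥ K, ∃ y ∈ S, dist (a q) y < ε := by
    intro ε hε
    obtain ⟨K, hK⟩ := happroach ε hε
    refine ⟨K, fun q hq => hK (m * q) ?_⟩
    calc K ≤ q := hq
      _ = 1 * q := (one_mul q).symm
      _ ≤ m * q := Nat.mul_le_mul_right q hm
  have hjump : ∀ ε > 0, ∃ K, ∀ q ≥ K, dist (a (q + 1)) (a q) < ε := by
    intro ε hε
    have hgc : Continuous ((⇑f)^[m]) := f.continuous.iterate m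
    obtain ⟨η, hη, hη2⟩ := Metric.uniformContinuous_iff.mp
      (CompactSpace.uniformContinuous_of_continuous hgc) (ε / 2) (half_pos hε)
    obtain ⟨K, hK⟩ := hnear (min (ε / 2) η) (lt_min (half_pos hε) hη)
    refine ⟨K, fun q hq => ?_⟩
    obtain ⟨y, hyS, hy⟩ := hK q hq
    have h1 : dist ((⇑f)^[m] (a q)) ((⇑f)^[m] y) < ε / 2 :=
      hη2 (lt_of_lt_of_le hy (min_le_right _ _))
    calc dist (a (q + 1)) (a q) ≤ dist (a (q + 1)) y + dist y (a q) := dist_triangle _ _ _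
      _ < ε / 2 + ε / 2 := by
          apply add_lt_add
          · rw [ha_succ q, ← hfix y hyS]; exact h1
          · rw [dist_comm]; exact lt_of_lt_of_le hy (min_le_left _ _)
      _ = ε := add_halves ε
  -- convergence of the subsampled orbit to some p ∈ S
  have hconv : ∃ p ∈ S, ∀ ε > 0, ∃ K, ∀ q ≥ K, dist (a q) p < ε := by
    obtain ⟨δ, hδ, hsep'⟩ := hsep
    obtain ⟨K1, hK1⟩ := hnear (δ / 4) (by positivity)
    obtain ⟨K2, hK2⟩ := hjump (δ / 4) (by positivity)
    set K := max K1 K2 with hKdef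
    obtain ⟨p, hpS, hp⟩ := hK1 K (le_max_left _ _)
    have hstay : ∀ q, K ≤ q → dist (a q) p < δ / 4 := by
      intro q hq
      induction q, hq using Nat.le_induction with
      | base => exact hp
      | succ q hq ih =>
        obtain ⟨y, hyS, hy⟩ := hK1 (q + 1) (le_trans (le_max_left K1 K2) (Nat.le_succ_of_le hq))
        have hj : dist (a (q + 1)) (a q) < δ / 4 := hK2 q (le_trans (le_max_right _ _) hq)
        have hyp : dist y p < δ := by
          calc dist y p ≤ dist y (a (q + 1)) + dist (a (q + 1)) (a q) + dist (a q) p :=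
                dist_triangle4 _ _ _ _
            _ < δ / 4 + δ / 4 + δ / 4 := by
                apply add_lt_add (add_lt_add _ hj) ih
                rw [dist_comm]; exact hy
            _ < δ := by linarith
        have : y = p := hsep' y hyS p hpS hyp
        rw [← this]; exact hy
    refine ⟨p, hpS, fun ε hε => ?_⟩
    obtain ⟨K3, hK3⟩ := hnear (min ε (δ / 4)) (lt_min hε (by positivity))
    refine ⟨max K K3, fun q hq => ?_⟩
    obtain ⟨y, hyS, hy⟩ := hK3 q (le_trans (le_max_right _ _) hq)
    have hyp : dist y p < δ := by
      calc dist y p ≤ dist y (a q) + dist (a q) p := dist_triangle _ _ _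
        _ < δ / 4 + δ / 4 := by
            apply add_lt_add _ (hstay q (le_trans (le_max_left _ _) hq))
            rw [dist_comm]; exact lt_of_lt_of_le hy (min_le_right _ _)
        _ < δ := by linarith
    rw [hsep' y hyS p hpS hyp] at hy
    exact lt_of_lt_of_le hy (min_le_left _ _)
  obtain ⟨p, hpS, hp⟩ := hconv
  have hpfix : (⇑f)^[m] p = p := hfix p hpS
  -- orbit of x eventually c-shadows orbit of p
  have hcont : ∀ r < m, ∃ η > 0, ∀ z, dist z p < η → dist ((⇑f)^[r] z) ((⇑f)^[r] p) ≤ c := by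
    intro r _
    obtain ⟨η, hη, h⟩ := Metric.continuousAt_iff.mp ((f.continuous.iterate r).continuousAt) c hc
    exact ⟨η, hη, fun z hz => (h hz).le⟩
  obtain ⟨η, hη, hηP⟩ := aux_min_combine
    (fun r η => ∀ z, dist z p < η → dist ((⇑f)^[r] z) ((⇑f)^[r] p) ≤ c)
    (fun r η η' _ hle hP z hz => hP z (lt_of_lt_of_le hz hle)) m hcont
  obtain ⟨Q, hQ⟩ := hp η hη
  have hstable : ∀ k, m * Q ≤ k → dist ((⇑f)^[k] x) ((⇑f)^[k] p) ≤ c := by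
    intro k hk
    obtain ⟨q, r, hr, hkeq, hqQ⟩ : ∃ q r, r < m ∧ k = r + m * q ∧ Q ≤ q := by
      refine ⟨k / m, k % m, Nat.mod_lt _ hm, (Nat.mod_add_div k m).symm, ?_⟩
      rw [Nat.le_div_iff_mul_le hm, mul_comm]; exact hk
    subst hkeq
    rw [Function.iterate_add_apply, Function.iterate_add_apply]
    have hpp : (⇑f)^[m * q] p = p := by
      rw [Function.iterate_mul]; exact Function.iterate_fixed hpfix q
    rw [hpp]
    exact hηP r hr _ (hQ q hqQ)
  -- now n+1 points of the orbit lie in local stable set of p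
  by_contra hnp
  have hmem : ∀ j : ℕ, (⇑f)^[m * (Q + j)] x ∈ localStable f c p := by
    intro j k
    have h1 : (⇑f)^[k] ((⇑f)^[m * (Q + j)] x) = (⇑f)^[k + m * (Q + j)] x :=
      (Function.iterate_add_apply _ _ _ _).symm
    have h2 : (⇑f)^[k] p = (⇑f)^[k + m * (Q + j)] p := by
      rw [Function.iterate_add_apply]
      congr 1
      rw [Function.iterate_mul]
      exact (Function.iterate_fixed hpfix _).symm
    rw [h1, h2]
    apply hstable
    have : m * Q ≤ m * (Q + j) := Nat.mul_le_mul_left m (by omega)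
    omega
  have hinj : Function.Injective (fun j : ℕ => (⇑f)^[m * (Q + j)] x) := by
    intro i j hij
    by_contra hne
    rcases Nat.lt_or_ge i j with h | h
    · have hlt : m * (Q + i) < m * (Q + j) := by gcongr <;> omega
      exact hnp (key _ _ hlt hij)
    · have hji : j < i := by omega
      have hlt : m * (Q + j) < m * (Q + i) :=
        by gcongr <;> omega
      exact hnp (key _ _ hlt hij.symm)
  set S' : Finset X := Finset.image (fun j : ℕ => (⇑f)^[m * (Q + j)] x) (Finset.range (n + 1))
    with hS'def
  have hsub : ↑S' ⊆ localStable f c p := by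
    intro z hz
    simp only [hS'def, Finset.coe_image, Set.mem_image, Finset.mem_coe, Finset.mem_range] at hz
    obtain ⟨j, -, rfl⟩ := hz
    exact hmem j
  have hcard1 : S'.card = n + 1 := by
    rw [hS'def, Finset.card_image_of_injective _ hinj, Finset.card_range]
  have := hcard p S' hsub
  omega
end
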